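/- arXiv:2306.17495 — 2 statements merged into one kernel-verified Lean document; each statement's English description precedes it below -/
import Mathlib

section
/- Let ν > 0, T > 0, k ∈ {1, 2, 3}, and let n, J : [0,1] × [0,T] → ℝ be smooth functions satisfying n_t − ν n_{xx} + J_x = 0 on [0,1] × [0,T] and ∂_x^j n(0,t) = ∂_x^j n(1,t) = 0 for j = 0, 1, …, k−1 and all t ∈ [0,T]. Then for all t ∈ [0,T]: ∫₀¹ (∂_x^k J)² dx = ν² ∫₀¹ (∂_x^{k+1} n)² dx + ∫₀¹ (∂_x^{k−1} n_t)² dx + ν (d/dt) ∫₀¹ (∂_x^k n)² dx. -/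
open Set

noncomputable section

/-- Time derivative of a function of time and space. -/
def tderiv (f : ℝ → ℝ → ℝ) (t x : ℝ) : ℝ := deriv (fun s => f s x) t

/-!
Differentiating the continuity equation `k - 1` times in `x` gives
`∂ₓᵏJ = ν ∂ₓᵏ⁺¹n - ∂ₓᵏ⁻¹nₜ` on `[0, 1]`. Squaring and integrating, one integration by parts
turns the cross term `-2ν ∫ ∂ₓᵏ⁺¹n ∂ₓᵏ⁻¹nₜ` into `2ν ∫ ∂ₓᵏn ∂ₓᵏnₜ`; the boundary term vanishes
because `∂ₓᵏ⁻¹n` vanishes at `x = 0, 1` for all `t ∈ [0, T]`, hence so does its time derivative,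
which equals `∂ₓᵏ⁻¹nₜ` since mixed partials commute. The same commutation identifies
`2 ∫ ∂ₓᵏn ∂ₓᵏnₜ` with `d/dt ∫ (∂ₓᵏn)²`.
-/

open scoped ContDiff

section VectorValued

variable {E : Type*} [NormedAddCommGroup E] [NormedSpace ℝ E]

theorem iteratedDeriv_iteratedDeriv (f : ℝ → E) (i j : ℕ) :
    iteratedDeriv i (iteratedDeriv j f) = iteratedDeriv (i + j) f := by
  simp only [iteratedDeriv_eq_iterate, Function.iterate_add_apply]

theorem ContDiff.hasDerivAt_iteratedDeriv {f : ℝ → E} (hf : ContDiff ℝ ∞ f) (j : ℕ) (x : ℝ) :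
    HasDerivAt (iteratedDeriv j f) (iteratedDeriv (j + 1) f x) x := by
  rw [iteratedDeriv_succ]
  exact (hf.differentiable_iteratedDeriv j (mod_cast ENat.natCast_lt_top j) x).hasDerivAt

theorem Set.EqOn.iteratedDeriv_Icc {f g : ℝ → E} {a b : ℝ} {m : ℕ} (hf : ContDiff ℝ m f)
    (hg : ContDiff ℝ m g) (hab : a < b) (h : EqOn f g (Icc a b)) :
    EqOn (iteratedDeriv m f) (iteratedDeriv m g) (Icc a b) := by
  have := (h.mono Ioo_subset_Icc_self).iteratedDeriv_of_isOpen isOpen_Ioo m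
  simpa only [closure_Ioo hab.ne] using
    this.closure (hf.continuous_iteratedDeriv' m) (hg.continuous_iteratedDeriv' m)

theorem DifferentiableAt.hasDerivAt_partial_fst {f : ℝ × ℝ → E} {s y : ℝ}
    (hf : DifferentiableAt ℝ f (s, y)) :
    HasDerivAt (fun s' => f (s', y)) (fderiv ℝ f (s, y) (1, 0)) s :=
  hf.hasFDerivAt.comp_hasDerivAt s ((hasDerivAt_id s).prodMk (hasDerivAt_const s y))

theorem DifferentiableAt.hasDerivAt_partial_snd {f : ℝ × ℝ → E} {s y : ℝ}
    (hf : DifferentiableAt ℝ f (s, y)) :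
    HasDerivAt (fun y' => f (s, y')) (fderiv ℝ f (s, y) (0, 1)) y :=
  hf.hasFDerivAt.comp_hasDerivAt y ((hasDerivAt_const y s).prodMk (hasDerivAt_id y))

theorem deriv_eq_zero_of_forall_Icc {g : ℝ → E} {a b t : ℝ} (hab : a < b) (ht : t ∈ Icc a b)
    (hg : DifferentiableAt ℝ g t) (h : ∀ s ∈ Icc a b, g s = 0) : deriv g t = 0 := by
  rw [← hg.derivWithin (uniqueDiffOn_Icc hab t ht), derivWithin_congr h (h t ht)]
  simp

end VectorValued

section Curried

variable {F : ℝ → ℝ → ℝ}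

theorem hasDerivAt_tderiv {t x : ℝ}
    (hF : DifferentiableAt ℝ (fun p : ℝ × ℝ => F p.1 p.2) (t, x)) :
    HasDerivAt (fun s => F s x) (tderiv F t x) t :=
  hF.hasDerivAt_partial_fst.differentiableAt.hasDerivAt

theorem contDiff_tderiv {k : WithTop ℕ∞} (hF : ContDiff ℝ (k + 1) fun p : ℝ × ℝ => F p.1 p.2) :
    ContDiff ℝ k fun p : ℝ × ℝ => tderiv F p.1 p.2 := by
  have hdiff := hF.differentiable (by simp)
  have hpartial : (fun p : ℝ × ℝ => tderiv F p.1 p.2)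
      = fun p => fderiv ℝ (fun q : ℝ × ℝ => F q.1 q.2) p (1, 0) :=
    funext fun p => (hdiff p).hasDerivAt_partial_fst.deriv
  rw [hpartial]
  exact (hF.fderiv_right le_rfl).clm_apply contDiff_const

theorem contDiff_deriv_snd {k : WithTop ℕ∞} (hF : ContDiff ℝ (k + 1) fun p : ℝ × ℝ => F p.1 p.2) :
    ContDiff ℝ k fun p : ℝ × ℝ => deriv (F p.1) p.2 := by
  have hdiff := hF.differentiable (by simp)
  have hpartial : (fun p : ℝ × ℝ => deriv (F p.1) p.2)
      = fun p => fderiv ℝ (fun q : ℝ × ℝ => F q.1 q.2) p (0, 1) :=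
    funext fun p => (hdiff p).hasDerivAt_partial_snd.deriv
  rw [hpartial]
  exact (hF.fderiv_right le_rfl).clm_apply contDiff_const

theorem contDiff_iteratedDeriv_snd (hF : ContDiff ℝ ∞ fun p : ℝ × ℝ => F p.1 p.2) (j : ℕ) :
    ContDiff ℝ ∞ fun p : ℝ × ℝ => iteratedDeriv j (F p.1) p.2 := by
  induction j with
  | zero => simpa using hF
  | succ j ih =>
    simp only [iteratedDeriv_succ]
    exact contDiff_deriv_snd (F := fun s => iteratedDeriv j (F s)) (by simpa using ih)

theorem tderiv_deriv_comm (hF : ContDiff ℝ 2 fun p : ℝ × ℝ => F p.1 p.2) (t x : ℝ) :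
    tderiv (fun s => deriv (F s)) t x = deriv (tderiv F t) x := by
  set f : ℝ × ℝ → ℝ := fun p => F p.1 p.2
  have hf : Differentiable ℝ f := hF.differentiable (by simp)
  have hf' : Differentiable ℝ (fderiv ℝ f) :=
    (hF.fderiv_right (m := 1) le_rfl).differentiable one_ne_zero
  have hx : (fun s => deriv (F s) x) = fun s => fderiv ℝ f (s, x) (0, 1) :=
    funext fun s => (hf (s, x)).hasDerivAt_partial_snd.deriv
  have ht : tderiv F t = fun y => fderiv ℝ f (t, y) (1, 0) :=
    funext fun y => (hf (t, y)).hasDerivAt_partial_fst.deriv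
  rw [tderiv, hx, ht, ((hf' (t, x)).hasDerivAt_partial_fst.clm_apply (hasDerivAt_const _ _)).deriv,
    ((hf' (t, x)).hasDerivAt_partial_snd.clm_apply (hasDerivAt_const _ _)).deriv]
  simp only [map_zero, add_zero]
  exact (hF.contDiffAt.isSymmSndFDerivAt (by simp)).eq _ _

theorem tderiv_iteratedDeriv (hF : ContDiff ℝ ∞ fun p : ℝ × ℝ => F p.1 p.2) (j : ℕ) (t x : ℝ) :
    tderiv (fun s => iteratedDeriv j (F s)) t x = iteratedDeriv j (tderiv F t) x := by
  induction j generalizing x with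
  | zero => simp only [iteratedDeriv_zero]
  | succ j ih =>
    simp only [iteratedDeriv_succ]
    rw [tderiv_deriv_comm ((contDiff_iteratedDeriv_snd hF j).of_le ENat.LEInfty.out)]
    exact congrArg (deriv · x) (funext ih)

theorem hasDerivAt_intervalIntegral_of_contDiff
    (hF : ContDiff ℝ 1 fun p : ℝ × ℝ => F p.1 p.2) (a b t : ℝ) :
    HasDerivAt (fun s => ∫ x in a..b, F s x) (∫ x in a..b, tderiv F t x) t := by
  have hF' : Continuous fun p : ℝ × ℝ => tderiv F p.1 p.2 :=
    (contDiff_tderiv (k := 0) (by simpa using hF)).continuous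
  have hK : IsCompact (Icc (t - 1) (t + 1) ×ˢ uIcc a b) := isCompact_Icc.prod isCompact_uIcc
  obtain ⟨M, hM⟩ := hK.exists_bound_of_continuousOn hF'.continuousOn
  have hdiff := hF.differentiable one_ne_zero
  refine (intervalIntegral.hasDerivAt_integral_of_dominated_loc_of_deriv_le (bound := fun _ => M)
    (Metric.ball_mem_nhds t one_pos)
    (.of_forall fun s => (hF.continuous.comp (.prodMk_right s)).aestronglyMeasurable)
    ((hF.continuous.comp (.prodMk_right t)).intervalIntegrable a b)
    (hF'.comp (.prodMk_right t)).aestronglyMeasurable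
    (.of_forall fun x hx s hs => hM (s, x) ⟨?_, uIoc_subset_uIcc hx⟩)
    intervalIntegrable_const
    (.of_forall fun x _ s _ => hasDerivAt_tderiv (hdiff (s, x)))).2
  rw [Metric.mem_ball, Real.dist_eq, abs_sub_lt_iff] at hs
  constructor <;> linarith

theorem hasDerivAt_intervalIntegral_sq {G : ℝ → ℝ → ℝ}
    (hG : ContDiff ℝ 1 fun p : ℝ × ℝ => G p.1 p.2) (a b t : ℝ) :
    HasDerivAt (fun s => ∫ x in a..b, G s x ^ 2) (2 * ∫ x in a..b, G t x * tderiv G t x) t := by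
  have hdiff := hG.differentiable one_ne_zero
  have hsq : ∀ x, tderiv (fun s x => G s x ^ 2) t x = 2 * (G t x * tderiv G t x) := fun x => by
    rw [tderiv, ((hasDerivAt_tderiv (hdiff (t, x))).fun_pow 2).deriv]
    ring
  have := hasDerivAt_intervalIntegral_of_contDiff (F := fun s x => G s x ^ 2) (hG.pow 2) a b t
  simpa only [hsq, intervalIntegral.integral_const_mul] using this

end Curried

theorem integral_const_mul_deriv_sub_sq {u u' v v' : ℝ → ℝ} {a b c : ℝ}
    (hu : ∀ x ∈ uIcc a b, HasDerivAt u (u' x) x) (hv : ∀ x ∈ uIcc a b, HasDerivAt v (v' x) x)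
    (hu' : ContinuousOn u' (uIcc a b)) (hv' : ContinuousOn v' (uIcc a b))
    (hva : v a = 0) (hvb : v b = 0) :
    ∫ x in a..b, (c * u' x - v x) ^ 2
      = c ^ 2 * (∫ x in a..b, u' x ^ 2) + (∫ x in a..b, v x ^ 2)
        + 2 * c * ∫ x in a..b, u x * v' x := by
  have hvc : ContinuousOn v (uIcc a b) := fun x hx => (hv x hx).continuousAt.continuousWithinAt
  have hibp : ∫ x in a..b, u x * v' x = -∫ x in a..b, u' x * v x := by
    rw [intervalIntegral.integral_mul_deriv_eq_deriv_mul hu hv (hu'.intervalIntegrable)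
      (hv'.intervalIntegrable), hva, hvb]
    ring
  have i1 : IntervalIntegrable (fun x => u' x ^ 2) MeasureTheory.volume a b :=
    (hu'.pow 2).intervalIntegrable
  have i2 : IntervalIntegrable (fun x => v x ^ 2) MeasureTheory.volume a b :=
    (hvc.pow 2).intervalIntegrable
  have i3 : IntervalIntegrable (fun x => u' x * v x) MeasureTheory.volume a b :=
    (hu'.mul hvc).intervalIntegrable
  have hsq : (fun x => (c * u' x - v x) ^ 2)
      = fun x => c ^ 2 * u' x ^ 2 + v x ^ 2 - 2 * c * (u' x * v x) := by
    funext x; ring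
  rw [hsq, intervalIntegral.integral_sub ((i1.const_mul _).add i2) (i3.const_mul _),
    intervalIntegral.integral_add (i1.const_mul _) i2, intervalIntegral.integral_const_mul,
    intervalIntegral.integral_const_mul, hibp]
  ring

theorem iteratedDeriv_eq_of_continuity_equation {ν a b : ℝ} {n nt J : ℝ → ℝ} (hab : a < b)
    (hn : ContDiff ℝ ∞ n) (hnt : ContDiff ℝ ∞ nt) (hJ : ContDiff ℝ ∞ J)
    (heq : ∀ x ∈ Icc a b, nt x - ν * iteratedDeriv 2 n x + deriv J x = 0) (m : ℕ) :
    EqOn (iteratedDeriv (m + 1) J) (fun x => ν * iteratedDeriv (m + 2) n x - iteratedDeriv m nt x)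
      (Icc a b) := by
  have hn2 : ContDiff ℝ ∞ (iteratedDeriv 2 n) := by
    simpa only [iteratedDeriv_eq_iterate] using hn.iterate_deriv 2
  have hJ' : EqOn (deriv J) (fun x => ν * iteratedDeriv 2 n x - nt x) (Icc a b) := fun x hx => by
    linarith [heq x hx]
  intro x hx
  rw [iteratedDeriv_succ',
    hJ'.iteratedDeriv_Icc ((contDiff_infty_iff_deriv.mp hJ).2.of_le ENat.LEInfty.out)
      (((contDiff_const.mul hn2).sub hnt).of_le ENat.LEInfty.out) hab hx,
    iteratedDeriv_fun_sub ((contDiff_const.mul hn2).contDiffAt.of_le ENat.LEInfty.out)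
      (hnt.contDiffAt.of_le ENat.LEInfty.out),
    iteratedDeriv_const_mul _ (hn2.contDiffAt.of_le ENat.LEInfty.out), iteratedDeriv_iteratedDeriv]

theorem current_derivative_identity_general (ν T : ℝ) (hT : 0 < T)
    (k : ℕ) (hk : k = 1 ∨ k = 2 ∨ k = 3)
    (n J : ℝ → ℝ → ℝ)
    (hn : ContDiff ℝ (⊤ : ℕ∞) fun p : ℝ × ℝ => n p.1 p.2)
    (hJ : ContDiff ℝ (⊤ : ℕ∞) fun p : ℝ × ℝ => J p.1 p.2)
    (heq : ∀ t ∈ Icc (0:ℝ) T, ∀ x ∈ Icc (0:ℝ) 1,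
      tderiv n t x - ν * iteratedDeriv 2 (n t) x + deriv (J t) x = 0)
    (hbc : ∀ t ∈ Icc (0:ℝ) T, ∀ j < k,
      iteratedDeriv j (n t) 0 = 0 ∧ iteratedDeriv j (n t) 1 = 0) :
    ∀ t ∈ Icc (0:ℝ) T,
      (∫ x in (0:ℝ)..1, (iteratedDeriv k (J t) x) ^ 2)
        = ν ^ 2 * (∫ x in (0:ℝ)..1, (iteratedDeriv (k + 1) (n t) x) ^ 2)
          + (∫ x in (0:ℝ)..1, (iteratedDeriv (k - 1) (fun y => tderiv n t y) x) ^ 2)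
          + ν * deriv (fun s => ∫ x in (0:ℝ)..1, (iteratedDeriv k (n s) x) ^ 2) t := by
  intro t ht
  obtain ⟨m, rfl⟩ : ∃ m, k = m + 1 := by rcases hk with rfl | rfl | rfl <;> exact ⟨_, rfl⟩
  have slice {F : ℝ → ℝ → ℝ} (hF : ContDiff ℝ ∞ fun p : ℝ × ℝ => F p.1 p.2) (s : ℝ) :
      ContDiff ℝ ∞ (F s) :=
    hF.comp (contDiff_const.prodMk contDiff_id)
  have hnt : ContDiff ℝ ∞ fun p : ℝ × ℝ => tderiv n p.1 p.2 := contDiff_tderiv hn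
  have hN := contDiff_iteratedDeriv_snd hn
  have hcurrent : ∀ x ∈ uIcc (0:ℝ) 1, iteratedDeriv (m + 1) (J t) x ^ 2
      = (ν * iteratedDeriv (m + 2) (n t) x - iteratedDeriv m (tderiv n t) x) ^ 2 := fun x hx => by
    rw [iteratedDeriv_eq_of_continuity_equation zero_lt_one (slice hn t) (slice hnt t)
      (slice hJ t) (heq t ht) m (uIcc_of_le (zero_le_one (α := ℝ)) ▸ hx)]
  have hboundary : ∀ x, (∀ s ∈ Icc 0 T, iteratedDeriv m (n s) x = 0) →
      iteratedDeriv m (tderiv n t) x = 0 := fun x hx => by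
    rw [← tderiv_iteratedDeriv hn]
    exact deriv_eq_zero_of_forall_Icc hT ht
      (((hN m).comp (contDiff_id.prodMk contDiff_const)).differentiable (by simp) t) hx
  have henergy := hasDerivAt_intervalIntegral_sq (G := fun s => iteratedDeriv (m + 1) (n s))
    ((hN (m + 1)).of_le ENat.LEInfty.out) 0 1 t
  simp only [Nat.add_sub_cancel]
  rw [intervalIntegral.integral_congr hcurrent, henergy.deriv,
    integral_const_mul_deriv_sub_sq (fun x _ => (slice hn t).hasDerivAt_iteratedDeriv (m + 1) x)
      (fun x _ => (slice hnt t).hasDerivAt_iteratedDeriv m x)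
      ((slice hn t).continuous_iteratedDeriv _ (mod_cast le_top)).continuousOn
      ((slice hnt t).continuous_iteratedDeriv _ (mod_cast le_top)).continuousOn
      (hboundary 0 fun s hs => (hbc s hs m m.lt_succ_self).1)
      (hboundary 1 fun s hs => (hbc s hs m m.lt_succ_self).2)]
  simp only [tderiv_iteratedDeriv hn]
  ring

/-- identity (3.22): for `k = 1, 2, 3`,
`∫ (∂_x^k J)² = ν² ∫ (∂_x^{k+1} n)² + ∫ (∂_x^{k-1} n_t)² + ν d/dt ∫ (∂_x^k n)²`
via the viscous continuity equation `n_t - ν n_{xx} + J_x = 0`. -/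
theorem current_derivative_identity (ν T : ℝ) (hν : 0 < ν) (hT : 0 < T)
    (k : ℕ) (hk : k = 1 ∨ k = 2 ∨ k = 3)
    (n J : ℝ → ℝ → ℝ)
    (hn : ContDiff ℝ (⊤ : ℕ∞) fun p : ℝ × ℝ => n p.1 p.2)
    (hJ : ContDiff ℝ (⊤ : ℕ∞) fun p : ℝ × ℝ => J p.1 p.2)
    (heq : ∀ t ∈ Icc (0:ℝ) T, ∀ x ∈ Icc (0:ℝ) 1,
      tderiv n t x - ν * iteratedDeriv 2 (n t) x + deriv (J t) x = 0)
    (hbc : ∀ t ∈ Icc (0:ℝ) T, ∀ j < k,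
      iteratedDeriv j (n t) 0 = 0 ∧ iteratedDeriv j (n t) 1 = 0) :
    ∀ t ∈ Icc (0:ℝ) T,
      (∫ x in (0:ℝ)..1, (iteratedDeriv k (J t) x) ^ 2)
        = ν ^ 2 * (∫ x in (0:ℝ)..1, (iteratedDeriv (k + 1) (n t) x) ^ 2)
          + (∫ x in (0:ℝ)..1, (iteratedDeriv (k - 1) (fun y => tderiv n t y) x) ^ 2)
          + ν * deriv (fun s => ∫ x in (0:ℝ)..1, (iteratedDeriv k (n s) x) ^ 2) t :=
  current_derivative_identity_general ν T hT k hk n J hn hJ heq hbc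
end
end

section
/- Let ν, τ, λ > 0, μ > 0, and let ρ ∈ C([0,1]) with ρ > 0 satisfy τ(2+τν)(2μ+5)(μνλ² + νρ(x))/(3λ²) > 1 for all x ∈ [0,1]. Then there exist positive constants l₁, l₂ (depending only on ν, τ, λ, μ and ρ) such that for all functions ñ, Ẽ ∈ H¹(0,1) with ñ(0) = 0 and Ẽ(0) = 0: l₁‖ñ‖²_{H¹} + l₂‖Ẽ‖²_{H¹} ≤ (8/(3τ(2μ+5)))‖Ẽ‖²_{L²} + (4ν/(3(2μ+5)))‖Ẽ_x‖²_{L²} + μν‖ñ_x‖²_{L²} + (ν/λ²)∫₀¹ ρ(x) ñ(x)² dx − (4/(τ(2μ+5)))∫₀¹ ñ(x)Ẽ(x) dx. -/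
open MeasureTheory Set

noncomputable section

/-- The squared `L²(0,1)` norm of a function. -/
def L2sq (f : ℝ → ℝ) : ℝ := ∫ x in (0:ℝ)..1, (f x) ^ 2

/-- The squared Sobolev `H^k(0,1)` norm of a function (classical derivatives). -/
def sobSq (k : ℕ) (f : ℝ → ℝ) : ℝ :=
  ∑ i ∈ Finset.range (k + 1), L2sq (iteratedDeriv i f)

open Filter Topology

/-!
Poincaré's inequality `‖f‖ ≤ ‖f'‖` on `[0,1]` for `f(0) = 0` lets the derivative terms absorb
the `L²` terms. Replacing `ρ` by its minimum `m`, what remains is `α A + β B - c D` with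
`A = ‖ñ‖²`, `B = ‖Ẽ‖²`, `D = ∫ ñ Ẽ`, `D² ≤ A B`, and the hypothesis at the minimiser of `ρ` is
exactly `c² < 4 α β`. By continuity this survives lowering `α` and `β` by some `δ > 0`, which
gives the coercivity.
-/

theorem L2sq_nonneg (f : ℝ → ℝ) : 0 ≤ L2sq f :=
  intervalIntegral.integral_nonneg zero_le_one fun _ _ => sq_nonneg _

theorem sobSq_one (f : ℝ → ℝ) : sobSq 1 f = L2sq f + L2sq (deriv f) := by
  simp [sobSq, Finset.sum_range_succ]

theorem sq_integral_mul_le_integral_sq_mul_integral_sq {f g : ℝ → ℝ} (hf : Continuous f)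
    (hg : Continuous g) {a b : ℝ} (hab : a ≤ b) :
    (∫ x in a..b, f x * g x) ^ 2 ≤ (∫ x in a..b, f x ^ 2) * ∫ x in a..b, g x ^ 2 := by
  have hnonneg : ∀ t : ℝ, 0 ≤ (∫ x in a..b, f x ^ 2) * (t * t)
      + (-2 * ∫ x in a..b, f x * g x) * t + ∫ x in a..b, g x ^ 2 := by
    intro t
    have hexpand : (fun x => (t * f x - g x) ^ 2)
        = fun x => t * t * f x ^ 2 + -2 * t * (f x * g x) + g x ^ 2 := by
      funext x; ring
    have key : 0 ≤ ∫ x in a..b, (t * f x - g x) ^ 2 :=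
      intervalIntegral.integral_nonneg hab fun x _ => sq_nonneg _
    rw [hexpand, intervalIntegral.integral_add, intervalIntegral.integral_add,
      intervalIntegral.integral_const_mul, intervalIntegral.integral_const_mul] at key
    · linarith
    all_goals exact Continuous.intervalIntegrable (by fun_prop) _ _
  have := discrim_le_zero hnonneg
  rw [discrim] at this
  linarith

theorem sq_integral_zero_le_L2sq {g : ℝ → ℝ} (hg : Continuous g) {x : ℝ}
    (hx : x ∈ Icc (0:ℝ) 1) :
    (∫ y in (0:ℝ)..x, g y) ^ 2 ≤ L2sq g := by
  have hcs := sq_integral_mul_le_integral_sq_mul_integral_sq (continuous_const (y := 1)) hg hx.1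
  simp only [one_mul, one_pow, intervalIntegral.integral_const, sub_zero, smul_eq_mul,
    mul_one] at hcs
  have hmono : ∫ y in (0:ℝ)..x, g y ^ 2 ≤ L2sq g :=
    intervalIntegral.integral_mono_interval le_rfl hx.1 hx.2
      (Eventually.of_forall fun y => sq_nonneg _) ((hg.pow 2).intervalIntegrable 0 1)
  have hnonneg : 0 ≤ ∫ y in (0:ℝ)..x, g y ^ 2 :=
    intervalIntegral.integral_nonneg hx.1 fun y _ => sq_nonneg _
  nlinarith [hx.2]

theorem L2sq_le_L2sq_deriv {f : ℝ → ℝ} (hf : ContDiff ℝ 1 f) (hf0 : f 0 = 0) :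
    L2sq f ≤ L2sq (deriv f) := by
  have hf' : Continuous (deriv f) := hf.continuous_deriv le_rfl
  have hpointwise : ∀ x ∈ Icc (0:ℝ) 1, f x ^ 2 ≤ L2sq (deriv f) := by
    intro x hx
    have hftc : ∫ y in (0:ℝ)..x, deriv f y = f x := by
      rw [intervalIntegral.integral_deriv_eq_sub
        (fun y _ => (hf.differentiable one_ne_zero).differentiableAt)
        (hf'.intervalIntegrable 0 x), hf0, sub_zero]
    exact hftc ▸ sq_integral_zero_le_L2sq hf' hx
  calc L2sq f ≤ ∫ _ in (0:ℝ)..1, L2sq (deriv f) :=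
        intervalIntegral.integral_mono_on zero_le_one
          ((hf.continuous.pow 2).intervalIntegrable 0 1) intervalIntegrable_const hpointwise
    _ = L2sq (deriv f) := by simp

theorem mul_L2sq_le_integral_mul_sq {ρ f : ℝ → ℝ} {m : ℝ} (hρ : ContinuousOn ρ (Icc 0 1))
    (hm : ∀ x ∈ Icc (0:ℝ) 1, m ≤ ρ x) (hf : Continuous f) :
    m * L2sq f ≤ ∫ x in (0:ℝ)..1, ρ x * f x ^ 2 := by
  rw [L2sq, ← intervalIntegral.integral_const_mul]
  refine intervalIntegral.integral_mono_on zero_le_one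
    (Continuous.intervalIntegrable (by fun_prop) _ _) ?_
    fun x hx => mul_le_mul_of_nonneg_right (hm x hx) (sq_nonneg _)
  exact ContinuousOn.intervalIntegrable (by rw [uIcc_of_le zero_le_one]; fun_prop)

theorem exists_pos_coercive_of_sq_lt {α β c : ℝ} (hα : 0 < α) (hβ : 0 < β)
    (hc : c ^ 2 < 4 * α * β) :
    ∃ δ > 0, ∀ A B D : ℝ, 0 ≤ A → 0 ≤ B → D ^ 2 ≤ A * B →
      δ * (A + B) ≤ α * A + β * B - c * D := by
  have hnear :
      ∀ᶠ δ in 𝓝 (0:ℝ), δ < α ∧ δ < β ∧ c ^ 2 < 4 * (α - δ) * (β - δ) :=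
    (eventually_lt_nhds hα).and <| (eventually_lt_nhds hβ).and <|
      continuousAt_const.eventually_lt (by fun_prop) (by simpa using hc)
  obtain ⟨δ, ⟨hδα, hδβ, hδc⟩, hδ⟩ :=
    ((hnear.filter_mono nhdsWithin_le_nhds).and self_mem_nhdsWithin).exists (f := 𝓝[>] 0)
  refine ⟨δ, hδ, fun A B D hA hB hD => ?_⟩
  -- AM–GM: `(α' A + β' B)² ≥ 4 α' β' A B ≥ c² A B ≥ (c D)²` for `α' = α - δ`, `β' = β - δ`.
  have hsq : (c * D) ^ 2 ≤ ((α - δ) * A + (β - δ) * B) ^ 2 := by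
    nlinarith [sq_nonneg ((α - δ) * A - (β - δ) * B), mul_nonneg hA hB, sq_nonneg c,
      mul_le_mul_of_nonneg_left hD (sq_nonneg c),
      mul_le_mul_of_nonneg_right hδc.le (mul_nonneg hA hB)]
  have := (abs_le_of_sq_le_sq' hsq (by nlinarith)).2
  linarith

theorem min_half_mul_add_le {κ δ X Y : ℝ} (hκ : 0 < κ) (hδ : 0 < δ) (hX : 0 ≤ X)
    (hXY : X ≤ Y) :
    min δ κ / 2 * (X + Y) ≤ κ * (Y - X) + δ * X := by
  have h1 : min δ κ ≤ δ := min_le_left _ _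
  have h2 : min δ κ ≤ κ := min_le_right _ _
  have h3 : 0 < min δ κ := lt_min hδ hκ
  nlinarith [mul_le_mul_of_nonneg_right h1 hX, mul_le_mul_of_nonneg_right h2 (sub_nonneg.2 hXY)]

theorem sq_lt_of_coercivity_condition {ν τ lam μ r : ℝ} (hτ : 0 < τ) (hlam : 0 < lam) (hμ : 0 < μ)
    (h : 1 < τ * (2 + τ * ν) * (2 * μ + 5) * (μ * ν * lam ^ 2 + ν * r) / (3 * lam ^ 2)) :
    (4 / (τ * (2 * μ + 5))) ^ 2
      < 4 * (μ * ν + ν / lam ^ 2 * r)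
        * (8 / (3 * τ * (2 * μ + 5)) + 4 * ν / (3 * (2 * μ + 5))) := by
  rw [one_lt_div (by positivity)] at h
  have hid : 4 * (μ * ν + ν / lam ^ 2 * r)
        * (8 / (3 * τ * (2 * μ + 5)) + 4 * ν / (3 * (2 * μ + 5))) - (4 / (τ * (2 * μ + 5))) ^ 2
      = 16 / (3 * (τ * (2 * μ + 5)) ^ 2 * lam ^ 2)
        * (τ * (2 + τ * ν) * (2 * μ + 5) * (μ * ν * lam ^ 2 + ν * r) - 3 * lam ^ 2) := by
    field_simp
    ring
  have := mul_pos (by positivity : (0:ℝ) < 16 / (3 * (τ * (2 * μ + 5)) ^ 2 * lam ^ 2))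
    (sub_pos.2 h)
  linarith

/-- estimate (3.15): coercivity of the quadratic form appearing in the
energy method, under the condition `τ(2+τν)(2μ+5)(μνλ² + νρ(x))/(3λ²) > 1` on `[0,1]`. -/
theorem coercivity_estimate (ν τ lam μ : ℝ) (hν : 0 < ν) (hτ : 0 < τ)
    (hlam : 0 < lam) (hμ : 0 < μ)
    (ρ : ℝ → ℝ) (hρc : ContinuousOn ρ (Icc 0 1)) (hρpos : ∀ x ∈ Icc (0:ℝ) 1, 0 < ρ x)
    (hcond : ∀ x ∈ Icc (0:ℝ) 1,
      1 < τ * (2 + τ * ν) * (2 * μ + 5) * (μ * ν * lam ^ 2 + ν * ρ x) / (3 * lam ^ 2)) :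
    ∃ l₁ > (0:ℝ), ∃ l₂ > (0:ℝ), ∀ tn tE : ℝ → ℝ,
      ContDiff ℝ 1 tn → ContDiff ℝ 1 tE → tn 0 = 0 → tE 0 = 0 →
      l₁ * sobSq 1 tn + l₂ * sobSq 1 tE
        ≤ (8 / (3 * τ * (2 * μ + 5))) * L2sq tE
          + (4 * ν / (3 * (2 * μ + 5))) * L2sq (deriv tE)
          + μ * ν * L2sq (deriv tn)
          + (ν / lam ^ 2) * (∫ x in (0:ℝ)..1, ρ x * (tn x) ^ 2)
          - (4 / (τ * (2 * μ + 5))) * ∫ x in (0:ℝ)..1, tn x * tE x := by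
  obtain ⟨x₀, hx₀, hmin⟩ := isCompact_Icc.exists_isMinOn (nonempty_Icc.2 zero_le_one) hρc
  set b := 4 * ν / (3 * (2 * μ + 5))
  obtain ⟨δ, hδ, hcoercive⟩ := exists_pos_coercive_of_sq_lt
    (by have := hρpos x₀ hx₀; positivity) (by positivity)
    (sq_lt_of_coercivity_condition hτ hlam hμ (hcond x₀ hx₀))
  refine ⟨min δ (μ * ν) / 2, by positivity, min δ b / 2, by positivity,
    fun tn tE hn hE hn0 hE0 => ?_⟩
  have hnE := hcoercive _ _ _ (L2sq_nonneg tn) (L2sq_nonneg tE)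
    (sq_integral_mul_le_integral_sq_mul_integral_sq hn.continuous hE.continuous zero_le_one)
  have hρn := mul_le_mul_of_nonneg_left
    (mul_L2sq_le_integral_mul_sq hρc (fun x hx => hmin hx) hn.continuous)
    (by positivity : 0 ≤ ν / lam ^ 2)
  have hn' := min_half_mul_add_le (κ := μ * ν) (by positivity) hδ (L2sq_nonneg tn)
    (L2sq_le_L2sq_deriv hn hn0)
  have hE' := min_half_mul_add_le (κ := b) (by positivity) hδ (L2sq_nonneg tE)
    (L2sq_le_L2sq_deriv hE hE0)
  rw [sobSq_one, sobSq_one]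
  unfold L2sq at *
  linarith
end
end
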